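/- arXiv:1011.4488 — 2 statements merged into one kernel-verified Lean document; each statement's English description precedes it below -/
import Mathlib

section
/- Suppose u : [-r, T] → H is a solution satisfying the uniform Hölder bound ‖u(t₁) − u(t₂)‖ ≤ L₀|t₁ − t₂|^{1/2} for all t₁, t₂, suppose B : H → H is Lipschitz with constant L_B, and suppose η satisfies the Lipschitz bound |η(u_{t₁}) − η(u_{t₂})| ≤ L_η ‖u_{t₁} − u_{t₂}‖_C along the trajectory. Then f(t) := B(u(t − η(u_t))) satisfies, for |t₁ − t₂| ≤ 1, the Hölder estimate ‖f(t₁) − f(t₂)‖ ≤ L_B L₀ (1 + (L_η L₀)^{1/2}) |t₁ − t₂|^{1/4}. -/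
/-!
The deviated argument `s(t) = t - η(u_t)` moves by at most `d + L_η L₀ d^{1/2}` when `t` moves
by `d`, since `u_t` inherits the `1/2`-Hölder bound of `u` in the sup norm and `η` is Lipschitz.
Composing with the `1/2`-Hölder map `u` and subadditivity of `x ↦ x^{1/2}` give
`d^{1/2} + (L_η L₀)^{1/2} d^{1/4}`, and `d^{1/2} ≤ d^{1/4}` for `d ≤ 1`.
-/

/-- The history segment `u_t ∈ C([-r,0];H)`, `u_t(θ) = u(t+θ)`. -/
noncomputable def seg {H : Type*} [NormedAddCommGroup H] (r : ℝ) (u : ℝ → H)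
    (hu : Continuous u) (t : ℝ) : C(Set.Icc (-r) (0:ℝ), H) :=
  ⟨fun θ => u (t + θ.1), hu.comp (by fun_prop)⟩

lemma sub_mem_Icc_neg_of_mem_Icc {t T e r : ℝ} (ht : t ∈ Set.Icc 0 T) (he : e ∈ Set.Icc 0 r) :
    t - e ∈ Set.Icc (-r) T :=
  ⟨by linarith [ht.1, he.2], by linarith [ht.2, he.1]⟩

lemma norm_seg_sub_seg_le {H : Type*} [NormedAddCommGroup H] {r T L α : ℝ} (hL : 0 ≤ L)
    {u : ℝ → H} (hu : Continuous u)
    (hHolder : ∀ s₁ ∈ Set.Icc (-r) T, ∀ s₂ ∈ Set.Icc (-r) T, ‖u s₁ - u s₂‖ ≤ L * |s₁ - s₂| ^ α)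
    {t₁ t₂ : ℝ} (ht₁ : t₁ ∈ Set.Icc 0 T) (ht₂ : t₂ ∈ Set.Icc 0 T) :
    ‖seg r u hu t₁ - seg r u hu t₂‖ ≤ L * |t₁ - t₂| ^ α := by
  refine (ContinuousMap.norm_le _ (by positivity)).mpr fun θ => ?_
  have hθ : -θ.1 ∈ Set.Icc 0 r := ⟨by linarith [θ.2.2], by linarith [θ.2.1]⟩
  have h := hHolder _ (sub_mem_Icc_neg_of_mem_Icc ht₁ hθ) _ (sub_mem_Icc_neg_of_mem_Icc ht₂ hθ)
  simpa [seg] using h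

lemma abs_sub_delay_sub_le {H : Type*} [NormedAddCommGroup H] {r T L L_η α : ℝ} (hL : 0 ≤ L)
    (hLη : 0 ≤ L_η) {u : ℝ → H} (hu : Continuous u)
    (hHolder : ∀ s₁ ∈ Set.Icc (-r) T, ∀ s₂ ∈ Set.Icc (-r) T, ‖u s₁ - u s₂‖ ≤ L * |s₁ - s₂| ^ α)
    {η : C(Set.Icc (-r) (0:ℝ), H) → ℝ} {t₁ t₂ : ℝ}
    (hηLip : |η (seg r u hu t₁) - η (seg r u hu t₂)| ≤ L_η * ‖seg r u hu t₁ - seg r u hu t₂‖)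
    (ht₁ : t₁ ∈ Set.Icc 0 T) (ht₂ : t₂ ∈ Set.Icc 0 T) :
    |(t₁ - η (seg r u hu t₁)) - (t₂ - η (seg r u hu t₂))|
      ≤ |t₁ - t₂| + L_η * L * |t₁ - t₂| ^ α := by
  have hη : |η (seg r u hu t₁) - η (seg r u hu t₂)| ≤ L_η * (L * |t₁ - t₂| ^ α) :=
    hηLip.trans (mul_le_mul_of_nonneg_left (norm_seg_sub_seg_le hL hu hHolder ht₁ ht₂) hLη)
  calc |(t₁ - η (seg r u hu t₁)) - (t₂ - η (seg r u hu t₂))|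
      = |(t₁ - t₂) - (η (seg r u hu t₁) - η (seg r u hu t₂))| := by ring_nf
    _ ≤ |t₁ - t₂| + |η (seg r u hu t₁) - η (seg r u hu t₂)| := abs_sub _ _
    _ ≤ |t₁ - t₂| + L_η * L * |t₁ - t₂| ^ α := by rw [mul_assoc]; gcongr

lemma rpow_le_one_add_rpow_mul_rpow_mul_self {α x d K : ℝ} (hα₀ : 0 ≤ α) (hα₁ : α ≤ 1)
    (hx : 0 ≤ x) (hd₀ : 0 ≤ d) (hd₁ : d ≤ 1) (hK : 0 ≤ K) (h : x ≤ d + K * d ^ α) :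
    x ^ α ≤ (1 + K ^ α) * d ^ (α * α) := by
  have hd_le : d ^ α ≤ d ^ (α * α) :=
    Real.rpow_le_rpow_of_exponent_ge' hd₀ hd₁ (by positivity) (mul_le_of_le_one_left hα₀ hα₁)
  calc x ^ α ≤ (d + K * d ^ α) ^ α := Real.rpow_le_rpow hx h hα₀
    _ ≤ d ^ α + (K * d ^ α) ^ α := Real.rpow_add_le_add_rpow hd₀ (by positivity) hα₀ hα₁
    _ = d ^ α + K ^ α * d ^ (α * α) := by
        rw [Real.mul_rpow hK (by positivity), ← Real.rpow_mul hd₀]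
    _ ≤ (1 + K ^ α) * d ^ (α * α) := by rw [add_mul, one_mul]; gcongr

theorem stmt_11_general {H : Type*} [NormedAddCommGroup H]
    (r T L₀ L_B L_η : ℝ)
    (hL₀ : 0 ≤ L₀) (hLB : 0 ≤ L_B) (hLη : 0 ≤ L_η)
    (u : ℝ → H) (hu : Continuous u)
    (hHolder : ∀ t₁ ∈ Set.Icc (-r) T, ∀ t₂ ∈ Set.Icc (-r) T,
      ‖u t₁ - u t₂‖ ≤ L₀ * |t₁ - t₂| ^ ((1:ℝ)/2))
    (B : H → H) (hB : ∀ v w : H, ‖B v - B w‖ ≤ L_B * ‖v - w‖)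
    (η : C(Set.Icc (-r) (0:ℝ), H) → ℝ) (hηr : ∀ φ, η φ ∈ Set.Icc (0:ℝ) r)
    (hηLip : ∀ t₁ ∈ Set.Icc (0:ℝ) T, ∀ t₂ ∈ Set.Icc (0:ℝ) T,
      |η (seg r u hu t₁) - η (seg r u hu t₂)| ≤ L_η * ‖seg r u hu t₁ - seg r u hu t₂‖) :
    ∀ t₁ ∈ Set.Icc (0:ℝ) T, ∀ t₂ ∈ Set.Icc (0:ℝ) T, |t₁ - t₂| ≤ 1 →
      ‖B (u (t₁ - η (seg r u hu t₁))) - B (u (t₂ - η (seg r u hu t₂)))‖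
        ≤ L_B * L₀ * (1 + (L_η * L₀) ^ ((1:ℝ)/2)) * |t₁ - t₂| ^ ((1:ℝ)/4) := by
  intro t₁ ht₁ t₂ ht₂ hle
  have hdelay := abs_sub_delay_sub_le hL₀ hLη hu hHolder (hηLip t₁ ht₁ t₂ ht₂) ht₁ ht₂
  have hpow := rpow_le_one_add_rpow_mul_rpow_mul_self (by norm_num) (by norm_num)
    (abs_nonneg _) (abs_nonneg _) hle (by positivity) hdelay
  have hu_delay := hHolder _ (sub_mem_Icc_neg_of_mem_Icc ht₁ (hηr (seg r u hu t₁)))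
    _ (sub_mem_Icc_neg_of_mem_Icc ht₂ (hηr (seg r u hu t₂)))
  calc ‖B (u (t₁ - η (seg r u hu t₁))) - B (u (t₂ - η (seg r u hu t₂)))‖
      ≤ L_B * (L₀ * ((1 + (L_η * L₀) ^ ((1:ℝ)/2)) * |t₁ - t₂| ^ ((1:ℝ)/2 * (1/2)))) :=
        (hB _ _).trans (by gcongr; exact hu_delay.trans (by gcongr))
    _ = L_B * L₀ * (1 + (L_η * L₀) ^ ((1:ℝ)/2)) * |t₁ - t₂| ^ ((1:ℝ)/4) := by norm_num; ring

/-- Hölder estimate (17) in the Lemma of the paper: along a `1/2`-Hölder trajectory,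
`f(t) = B(u(t - η(u_t)))` is `1/4`-Hölder with the stated constant. -/
theorem stmt_11 {H : Type*} [NormedAddCommGroup H] [InnerProductSpace ℝ H]
    (r T L₀ L_B L_η : ℝ) (hr : 0 < r) (hT : 0 < T)
    (hL₀ : 0 ≤ L₀) (hLB : 0 ≤ L_B) (hLη : 0 ≤ L_η)
    (u : ℝ → H) (hu : Continuous u)
    (hHolder : ∀ t₁ ∈ Set.Icc (-r) T, ∀ t₂ ∈ Set.Icc (-r) T,
      ‖u t₁ - u t₂‖ ≤ L₀ * |t₁ - t₂| ^ ((1:ℝ)/2))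
    (B : H → H) (hB : ∀ v w : H, ‖B v - B w‖ ≤ L_B * ‖v - w‖)
    (η : C(Set.Icc (-r) (0:ℝ), H) → ℝ) (hηr : ∀ φ, η φ ∈ Set.Icc (0:ℝ) r)
    (hηLip : ∀ t₁ ∈ Set.Icc (0:ℝ) T, ∀ t₂ ∈ Set.Icc (0:ℝ) T,
      |η (seg r u hu t₁) - η (seg r u hu t₂)| ≤ L_η * ‖seg r u hu t₁ - seg r u hu t₂‖) :
    ∀ t₁ ∈ Set.Icc (0:ℝ) T, ∀ t₂ ∈ Set.Icc (0:ℝ) T, |t₁ - t₂| ≤ 1 →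
      ‖B (u (t₁ - η (seg r u hu t₁))) - B (u (t₂ - η (seg r u hu t₂)))‖
        ≤ L_B * L₀ * (1 + (L_η * L₀) ^ ((1:ℝ)/2)) * |t₁ - t₂| ^ ((1:ℝ)/4) :=
  stmt_11_general r T L₀ L_B L_η hL₀ hLB hLη u hu hHolder B hB η hηr hηLip
end

section
/- Let φ ∈ C([-r,0]; H) be L-Lipschitz (‖φ(θ₁) − φ(θ₂)‖ ≤ L|θ₁ − θ₂|), let η : C → [0,r] be Lipschitz with constant L_η on a set containing the histories involved, and suppose for all τ ∈ [0, t₁] both τ − η(u_τ) ≤ 0 and τ − η(u^k_τ) ≤ 0, with u(s) = φ(s) and u^k restricted so that u(τ − η(u^k_τ)) = φ(τ − η(u^k_τ)). Then J^k_2(t₁) := ∫₀^{t₁} ‖B(u(τ − η(u^k_τ))) − B(u(τ − η(u_τ)))‖ dτ ≤ L_B L L_η t₁ max_{s∈[-r,t₁]} ‖u^k(s) − u(s)‖. -/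
/-! Both delayed times `τ - η(u_τ)` and `τ - η(uᵏ_τ)` lie in `[-r, 0]`, where `u` is the
Lipschitz history `φ`. So the integrand is at most `L_B L |η(uᵏ_τ) - η(u_τ)|`, hence at most
`L_B L L_η ‖uᵏ_τ - u_τ‖`, and each segment norm is bounded by the supremum over `[-r, t₁]`. -/

open Set

section Segments

variable {H : Type*} [NormedAddCommGroup H] {u v : ℝ → H}

lemma bddAbove_range_norm_sub_Icc (hu : Continuous u) (hv : Continuous v) (a b : ℝ) :
    BddAbove (range fun s : Icc a b => ‖u s - v s‖) :=
  (isCompact_range (by fun_prop)).bddAbove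

lemma norm_seg_sub_le_iSup (r : ℝ) (hu : Continuous u) (hv : Continuous v) {t τ : ℝ}
    (hτ : τ ∈ Icc 0 t) :
    ‖seg r u hu τ - seg r v hv τ‖ ≤ ⨆ s : Icc (-r) t, ‖u s - v s‖ := by
  refine (ContinuousMap.norm_le _ (Real.iSup_nonneg fun _ => norm_nonneg _)).2 fun θ => ?_
  have hs : τ + θ.1 ∈ Icc (-r) t := ⟨by linarith [θ.2.1, hτ.1], by linarith [θ.2.2, hτ.2]⟩
  exact le_ciSup (bddAbove_range_norm_sub_Icc hu hv _ _) ⟨_, hs⟩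

end Segments

lemma norm_comp_sub_le_of_eq_initial {H : Type*} [NormedAddCommGroup H] {r L L_B : ℝ}
    (hLB : 0 ≤ L_B) {φ : C(Icc (-r) (0:ℝ), H)}
    (hφLip : ∀ θ₁ θ₂ : Icc (-r) (0:ℝ), ‖φ θ₁ - φ θ₂‖ ≤ L * |θ₁.1 - θ₂.1|)
    {u : ℝ → H} (hu0 : ∀ θ : Icc (-r) (0:ℝ), u θ.1 = φ θ)
    {B : H → H} (hB : ∀ v w : H, ‖B v - B w‖ ≤ L_B * ‖v - w‖)
    {a b : ℝ} (ha : a ∈ Icc (-r) 0) (hb : b ∈ Icc (-r) 0) :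
    ‖B (u a) - B (u b)‖ ≤ L_B * L * |a - b| :=
  calc ‖B (u a) - B (u b)‖
      ≤ L_B * ‖φ ⟨a, ha⟩ - φ ⟨b, hb⟩‖ := by rw [← hu0 ⟨a, ha⟩, ← hu0 ⟨b, hb⟩]; exact hB _ _
    _ ≤ L_B * (L * |a - b|) := mul_le_mul_of_nonneg_left (hφLip _ _) hLB
    _ = L_B * L * |a - b| := by ring

lemma intervalIntegral_le_mul_of_norm_le {f : ℝ → ℝ} {C t : ℝ} (ht : 0 ≤ t)
    (h : ∀ τ ∈ Ioc 0 t, ‖f τ‖ ≤ C) : ∫ τ in (0:ℝ)..t, f τ ≤ C * t := by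
  have hnorm := intervalIntegral.norm_integral_le_of_norm_le_const (a := 0) (b := t)
    (by rwa [uIoc_of_le ht])
  rw [sub_zero, abs_of_nonneg ht] at hnorm
  exact (le_abs_self _).trans hnorm

theorem stmt_18_general {H : Type*} [NormedAddCommGroup H]
    (r t₁ L L_B L_η : ℝ) (ht₁ : 0 < t₁)
    (hL : 0 ≤ L) (hLB : 0 ≤ L_B) (hLη : 0 ≤ L_η)
    (φ : C(Set.Icc (-r) (0:ℝ), H))
    (hφLip : ∀ θ₁ θ₂ : Set.Icc (-r) (0:ℝ), ‖φ θ₁ - φ θ₂‖ ≤ L * |θ₁.1 - θ₂.1|)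
    (u uk : ℝ → H) (hu : Continuous u) (huk : Continuous uk)
    (hu0 : ∀ θ : Set.Icc (-r) (0:ℝ), u θ.1 = φ θ)
    (B : H → H) (hB : ∀ v w : H, ‖B v - B w‖ ≤ L_B * ‖v - w‖)
    (η : C(Set.Icc (-r) (0:ℝ), H) → ℝ) (hηr : ∀ ψ, η ψ ∈ Set.Icc (0:ℝ) r)
    (hdel : ∀ τ ∈ Set.Icc (0:ℝ) t₁,
      τ - η (seg r u hu τ) ≤ 0 ∧ τ - η (seg r uk huk τ) ≤ 0)
    (hηLip : ∀ τ ∈ Set.Icc (0:ℝ) t₁,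
      |η (seg r uk huk τ) - η (seg r u hu τ)| ≤ L_η * ‖seg r uk huk τ - seg r u hu τ‖) :
    (∫ τ in (0:ℝ)..t₁, ‖B (u (τ - η (seg r uk huk τ))) - B (u (τ - η (seg r u hu τ)))‖)
      ≤ L_B * L * L_η * t₁ * ⨆ s : Set.Icc (-r) t₁, ‖uk s.1 - u s.1‖ := by
  set M := ⨆ s : Icc (-r) t₁, ‖uk s.1 - u s.1‖
  rw [mul_right_comm _ t₁]
  refine intervalIntegral_le_mul_of_norm_le ht₁.le fun τ hτ => ?_
  have hτ' : τ ∈ Icc 0 t₁ := Ioc_subset_Icc_self hτ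
  have delayed_mem (ψ : C(Icc (-r) (0:ℝ), H)) (hψ : τ - η ψ ≤ 0) : τ - η ψ ∈ Icc (-r) 0 :=
    ⟨by linarith [(hηr ψ).2, hτ'.1], hψ⟩
  rw [norm_norm]
  calc ‖B (u (τ - η (seg r uk huk τ))) - B (u (τ - η (seg r u hu τ)))‖
      ≤ L_B * L * |(τ - η (seg r uk huk τ)) - (τ - η (seg r u hu τ))| :=
        norm_comp_sub_le_of_eq_initial hLB hφLip hu0 hB
          (delayed_mem _ (hdel τ hτ').2) (delayed_mem _ (hdel τ hτ').1)
    _ = L_B * L * |η (seg r uk huk τ) - η (seg r u hu τ)| := by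
        rw [sub_sub_sub_cancel_left, abs_sub_comm]
    _ ≤ L_B * L * (L_η * M) := by
        gcongr
        exact (hηLip τ hτ').trans (by gcongr; exact norm_seg_sub_le_iSup r huk hu hτ')
    _ = L_B * L * L_η * M := by ring

/-- The central new estimate in the proof of Theorem 2 of the paper: if on `[0,t₁]`
the delayed arguments stay in the Lipschitz initial segment `φ`, then
`J₂ᵏ(t₁) ≤ L_B L L_η t₁ max_{s∈[-r,t₁]} ‖uᵏ(s) − u(s)‖`. -/
theorem stmt_18 {H : Type*} [NormedAddCommGroup H] [InnerProductSpace ℝ H]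
    [CompleteSpace H]
    (r t₁ L L_B L_η : ℝ) (hr : 0 < r) (ht₁ : 0 < t₁)
    (hL : 0 ≤ L) (hLB : 0 ≤ L_B) (hLη : 0 ≤ L_η)
    (φ : C(Set.Icc (-r) (0:ℝ), H))
    (hφLip : ∀ θ₁ θ₂ : Set.Icc (-r) (0:ℝ), ‖φ θ₁ - φ θ₂‖ ≤ L * |θ₁.1 - θ₂.1|)
    (u uk : ℝ → H) (hu : Continuous u) (huk : Continuous uk)
    (hu0 : ∀ θ : Set.Icc (-r) (0:ℝ), u θ.1 = φ θ)
    (B : H → H) (hB : ∀ v w : H, ‖B v - B w‖ ≤ L_B * ‖v - w‖)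
    (η : C(Set.Icc (-r) (0:ℝ), H) → ℝ) (hηr : ∀ ψ, η ψ ∈ Set.Icc (0:ℝ) r)
    (hdel : ∀ τ ∈ Set.Icc (0:ℝ) t₁,
      τ - η (seg r u hu τ) ≤ 0 ∧ τ - η (seg r uk huk τ) ≤ 0)
    (hηLip : ∀ τ ∈ Set.Icc (0:ℝ) t₁,
      |η (seg r uk huk τ) - η (seg r u hu τ)| ≤ L_η * ‖seg r uk huk τ - seg r u hu τ‖) :
    (∫ τ in (0:ℝ)..t₁, ‖B (u (τ - η (seg r uk huk τ))) - B (u (τ - η (seg r u hu τ)))‖)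
      ≤ L_B * L * L_η * t₁ * ⨆ s : Set.Icc (-r) t₁, ‖uk s.1 - u s.1‖ :=
  stmt_18_general r t₁ L L_B L_η ht₁ hL hLB hLη φ hφLip u uk hu huk hu0 B hB η hηr hdel hηLip
end
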